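/- arXiv:2002.10927 — 3 statements merged into one kernel-verified Lean document; each statement's English description precedes it below -/
import Mathlib

section
/- Let (V,E) be a finite graph and F ⊆ E, and for S⊆V let δ(S) denote the set of edges of E with exactly one endpoint in S. Suppose X,Y⊆V are crossing (i.e., X∩Y, X\Y, Y\X and V\(X∪Y) are all nonempty) and |δ(X)∩F| = |δ(Y)∩F| = 1. Then either |δ(X∩Y)∩F| = |δ(X∪Y)∩F| = 1, or |δ(X\Y)∩F| = |δ(Y\X)∩F| = 1. -/
open scoped Classical

/-- The set of edges of `E` having exactly one endpoint in `S`. -/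
def cutEdges {V : Type*} (E : Set (Sym2 V)) (S : Set V) : Set (Sym2 V) :=
  {e | e ∈ E ∧ ∃ u v, e = s(u, v) ∧ ((u ∈ S ∧ v ∉ S) ∨ (v ∈ S ∧ u ∉ S))}

/-- An edge crosses a set `S`. -/
def crossE {V : Type*} (S : Set V) (e : Sym2 V) : Prop :=
  ∃ u v, e = s(u, v) ∧ ((u ∈ S ∧ v ∉ S) ∨ (v ∈ S ∧ u ∉ S))

lemma crossE_iff {V : Type*} (S : Set V) (u v : V) :
    crossE S s(u, v) ↔ ((u ∈ S ∧ v ∉ S) ∨ (v ∈ S ∧ u ∉ S)) := by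
  constructor
  · rintro ⟨a, b, hab, h⟩
    rw [Sym2.eq_iff] at hab
    rcases hab with ⟨rfl, rfl⟩ | ⟨rfl, rfl⟩ <;> tauto
  · intro h; exact ⟨u, v, rfl, h⟩

lemma cutEdges_inter {V : Type*} (E F : Set (Sym2 V)) (hF : F ⊆ E) (S : Set V) :
    cutEdges E S ∩ F = {e ∈ F | crossE S e} := by
  ext e
  simp only [cutEdges, crossE, Set.mem_inter_iff, Set.mem_setOf_eq, Set.mem_sep_iff]
  constructor
  · rintro ⟨⟨_, h⟩, hf⟩; exact ⟨hf, h⟩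
  · rintro ⟨hf, h⟩; exact ⟨⟨hF hf, h⟩, hf⟩

lemma crossE_inter {V : Type*} (X Y : Set V) (g : Sym2 V) (h : crossE (X ∩ Y) g) :
    crossE X g ∨ crossE Y g := by
  induction g using Sym2.ind with
  | _ u v => simp only [crossE_iff, Set.mem_inter_iff] at *; tauto

lemma crossE_union {V : Type*} (X Y : Set V) (g : Sym2 V) (h : crossE (X ∪ Y) g) :
    crossE X g ∨ crossE Y g := by
  induction g using Sym2.ind with
  | _ u v => simp only [crossE_iff, Set.mem_union] at *; tauto

lemma crossE_diff {V : Type*} (X Y : Set V) (g : Sym2 V) (h : crossE (X \ Y) g) :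
    crossE X g ∨ crossE Y g := by
  induction g using Sym2.ind with
  | _ u v => simp only [crossE_iff, Set.mem_diff] at *; tauto

lemma crossE_both {V : Type*} (X Y : Set V) (g : Sym2 V)
    (hx : crossE X g) (hy : crossE Y g) :
    (crossE (X ∩ Y) g ∧ crossE (X ∪ Y) g ∧ ¬ crossE (X \ Y) g ∧ ¬ crossE (Y \ X) g) ∨
    (¬ crossE (X ∩ Y) g ∧ ¬ crossE (X ∪ Y) g ∧ crossE (X \ Y) g ∧ crossE (Y \ X) g) := by
  induction g using Sym2.ind with
  | _ u v =>
    simp only [crossE_iff, Set.mem_inter_iff, Set.mem_union, Set.mem_diff] at *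
    by_cases ha : u ∈ X <;> by_cases hb : u ∈ Y <;> by_cases hc : v ∈ X <;>
      by_cases hd : v ∈ Y <;> simp_all

lemma crossE_onlyX {V : Type*} (X Y : Set V) (g : Sym2 V)
    (hx : crossE X g) (hy : ¬ crossE Y g) :
    (crossE (X ∩ Y) g ∧ ¬ crossE (X ∪ Y) g ∧ ¬ crossE (X \ Y) g ∧ crossE (Y \ X) g) ∨
    (¬ crossE (X ∩ Y) g ∧ crossE (X ∪ Y) g ∧ crossE (X \ Y) g ∧ ¬ crossE (Y \ X) g) := by
  induction g using Sym2.ind with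
  | _ u v =>
    simp only [crossE_iff, Set.mem_inter_iff, Set.mem_union, Set.mem_diff] at *
    by_cases ha : u ∈ X <;> by_cases hb : u ∈ Y <;> by_cases hc : v ∈ X <;>
      by_cases hd : v ∈ Y <;> simp_all

lemma crossE_onlyY {V : Type*} (X Y : Set V) (g : Sym2 V)
    (hx : ¬ crossE X g) (hy : crossE Y g) :
    (crossE (X ∩ Y) g ∧ ¬ crossE (X ∪ Y) g ∧ crossE (X \ Y) g ∧ ¬ crossE (Y \ X) g) ∨
    (¬ crossE (X ∩ Y) g ∧ crossE (X ∪ Y) g ∧ ¬ crossE (X \ Y) g ∧ crossE (Y \ X) g) := by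
  induction g using Sym2.ind with
  | _ u v =>
    simp only [crossE_iff, Set.mem_inter_iff, Set.mem_union, Set.mem_diff] at *
    by_cases ha : u ∈ X <;> by_cases hb : u ∈ Y <;> by_cases hc : v ∈ X <;>
      by_cases hd : v ∈ Y <;> simp_all

lemma sep_eq_singleton {V : Type*} (F : Set (Sym2 V)) (T : Sym2 V → Prop) (e : Sym2 V)
    (he : e ∈ F) (hTe : T e) (huniq : ∀ g ∈ F, T g → g = e) :
    ({g ∈ F | T g} : Set (Sym2 V)).ncard = 1 := by
  rw [Set.ncard_eq_one]
  refine ⟨e, ?_⟩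
  ext g
  simp only [Set.mem_sep_iff, Set.mem_singleton_iff]
  exact ⟨fun ⟨h1, h2⟩ => huniq g h1 h2, fun h => h ▸ ⟨he, hTe⟩⟩

/-- If `X, Y` cross and `δ(X)` and `δ(Y)` each contain exactly one edge
of `F`, then either `δ(X ∩ Y)` and `δ(X ∪ Y)`, or `δ(X \ Y)` and `δ(Y \ X)`, each
contain exactly one edge of `F`. -/
theorem uncrossing_single_demand_cuts {V : Type*} [Fintype V]
    (E F : Set (Sym2 V)) (hF : F ⊆ E) (X Y : Set V)
    (hcross : (X ∩ Y).Nonempty ∧ (X \ Y).Nonempty ∧ (Y \ X).Nonempty ∧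
      (Set.univ \ (X ∪ Y)).Nonempty)
    (hX : (cutEdges E X ∩ F).ncard = 1) (hY : (cutEdges E Y ∩ F).ncard = 1) :
    ((cutEdges E (X ∩ Y) ∩ F).ncard = 1 ∧ (cutEdges E (X ∪ Y) ∩ F).ncard = 1) ∨
      ((cutEdges E (X \ Y) ∩ F).ncard = 1 ∧ (cutEdges E (Y \ X) ∩ F).ncard = 1) := by
  rw [cutEdges_inter E F hF] at hX hY
  rw [cutEdges_inter E F hF, cutEdges_inter E F hF]
  rw [cutEdges_inter E F hF, cutEdges_inter E F hF]
  rw [Set.ncard_eq_one] at hX hY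
  obtain ⟨e, hXe⟩ := hX
  obtain ⟨f, hYf⟩ := hY
  have heF : e ∈ F ∧ crossE X e := by
    have : e ∈ {g ∈ F | crossE X g} := hXe ▸ rfl
    exact this
  have hfF : f ∈ F ∧ crossE Y f := by
    have : f ∈ {g ∈ F | crossE Y g} := hYf ▸ rfl
    exact this
  have huX : ∀ g ∈ F, crossE X g → g = e := fun g hg hc => by
    have : g ∈ {g ∈ F | crossE X g} := ⟨hg, hc⟩
    rwa [hXe] at this
  have huY : ∀ g ∈ F, crossE Y g → g = f := fun g hg hc => by
    have : g ∈ {g ∈ F | crossE Y g} := ⟨hg, hc⟩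
    rwa [hYf] at this
  by_cases hYe : crossE Y e
  · -- e = f, crosses both X and Y
    rcases crossE_both X Y e heF.2 hYe with ⟨h1, h2, h3, h4⟩ | ⟨h1, h2, h3, h4⟩
    · left
      constructor
      · exact sep_eq_singleton F _ e heF.1 h1 (fun g hg hc => by
          rcases crossE_inter X Y g hc with h | h
          · exact huX g hg h
          · exact (huY g hg h).trans (huY e heF.1 hYe).symm)
      · exact sep_eq_singleton F _ e heF.1 h2 (fun g hg hc => by
          rcases crossE_union X Y g hc with h | h
          · exact huX g hg h
          · exact (huY g hg h).trans (huY e heF.1 hYe).symm)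
    · right
      constructor
      · exact sep_eq_singleton F _ e heF.1 h3 (fun g hg hc => by
          rcases crossE_diff X Y g hc with h | h
          · exact huX g hg h
          · exact (huY g hg h).trans (huY e heF.1 hYe).symm)
      · exact sep_eq_singleton F _ e heF.1 h4 (fun g hg hc => by
          rcases crossE_diff Y X g hc with h | h
          · exact (huY g hg h).trans (huY e heF.1 hYe).symm
          · exact huX g hg h)
  · -- e crosses only X; then f does not cross X
    have hXf : ¬ crossE X f := fun h => hYe ((huX f hfF.1 h) ▸ hfF.2)
    have huniq : ∀ g ∈ F, crossE X g ∨ crossE Y g → g = e ∨ g = f := fun g hg hc => by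
      rcases hc with h | h
      · exact Or.inl (huX g hg h)
      · exact Or.inr (huY g hg h)
    rcases crossE_onlyX X Y e heF.2 hYe with ⟨e1, e2, e3, e4⟩ | ⟨e1, e2, e3, e4⟩ <;>
      rcases crossE_onlyY X Y f hXf hfF.2 with ⟨f1, f2, f3, f4⟩ | ⟨f1, f2, f3, f4⟩
    · -- e: AC-type, f: AB-type → right disjunct, δ(X\Y)={f}, δ(Y\X)={e}
      right
      refine ⟨sep_eq_singleton F _ f hfF.1 f3 (fun g hg hc => ?_),
        sep_eq_singleton F _ e heF.1 e4 (fun g hg hc => ?_)⟩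
      · rcases huniq g hg (crossE_diff X Y g hc) with rfl | rfl
        · exact absurd hc e3
        · rfl
      · rcases huniq g hg ((crossE_diff Y X g hc).symm) with rfl | rfl
        · rfl
        · exact absurd hc f4
    · -- e: AC-type, f: CD-type → left, δ(X∩Y)={e}, δ(X∪Y)={f}
      left
      refine ⟨sep_eq_singleton F _ e heF.1 e1 (fun g hg hc => ?_),
        sep_eq_singleton F _ f hfF.1 f2 (fun g hg hc => ?_)⟩
      · rcases huniq g hg (crossE_inter X Y g hc) with rfl | rfl
        · rfl
        · exact absurd hc f1
      · rcases huniq g hg (crossE_union X Y g hc) with rfl | rfl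
        · exact absurd hc e2
        · rfl
    · -- e: BD-type, f: AB-type → left, δ(X∩Y)={f}, δ(X∪Y)={e}
      left
      refine ⟨sep_eq_singleton F _ f hfF.1 f1 (fun g hg hc => ?_),
        sep_eq_singleton F _ e heF.1 e2 (fun g hg hc => ?_)⟩
      · rcases huniq g hg (crossE_inter X Y g hc) with rfl | rfl
        · exact absurd hc e1
        · rfl
      · rcases huniq g hg (crossE_union X Y g hc) with rfl | rfl
        · rfl
        · exact absurd hc f2
    · -- e: BD-type, f: CD-type → right, δ(X\Y)={e}, δ(Y\X)={f}
      right
      refine ⟨sep_eq_singleton F _ e heF.1 e3 (fun g hg hc => ?_),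
        sep_eq_singleton F _ f hfF.1 f4 (fun g hg hc => ?_)⟩
      · rcases huniq g hg (crossE_diff X Y g hc) with rfl | rfl
        · rfl
        · exact absurd hc f3
      · rcases huniq g hg ((crossE_diff Y X g hc).symm) with rfl | rfl
        · exact absurd hc e4
        · rfl
end

section
/- For every integer k ≥ 3, the minimum cardinality of a multicut for the instance (G_k, H_k) (all supply edge capacities equal to 1, so capacity equals cardinality) is exactly k−1. -/
open scoped Classical

/-- `H` is a minor of `G`: there are disjoint nonempty connected branch sets in `G`,
one for each vertex of `H`, with an edge of `G` between the branch sets of any two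
vertices adjacent in `H`. -/
def SimpleGraph.HasMinor {V : Type*} {W : Type*} (G : SimpleGraph V) (H : SimpleGraph W) : Prop :=
  ∃ φ : W → Set V,
    (∀ w, (φ w).Nonempty) ∧
    (∀ w, (G.induce (φ w)).Connected) ∧
    (∀ w₁ w₂, w₁ ≠ w₂ → Disjoint (φ w₁) (φ w₂)) ∧
    (∀ w₁ w₂, H.Adj w₁ w₂ → ∃ v₁ ∈ φ w₁, ∃ v₂ ∈ φ w₂, G.Adj v₁ v₂)

/-- Planarity, via Wagner's characterisation: a graph is planar iff it has
neither a `K₅` nor a `K₃,₃` minor. -/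
def SimpleGraph.IsPlanar {V : Type*} (G : SimpleGraph V) : Prop :=
  ¬ G.HasMinor (⊤ : SimpleGraph (Fin 5)) ∧
    ¬ G.HasMinor (completeBipartiteGraph (Fin 3) (Fin 3))

/-- A flow path for the instance `(G, H)`: a path in the supply graph `G` joining the
two endpoints of a demand edge of `H`. -/
structure FlowPath {V : Type*} (G H : SimpleGraph V) where
  src : V
  dst : V
  demand : H.Adj src dst
  walk : G.Walk src dst
  isPath : walk.IsPath

/-- The set of (supply) edges used by a flow path. -/
def FlowPath.edges {V : Type*} {G H : SimpleGraph V} (P : FlowPath G H) : Set (Sym2 V) :=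
  {e | e ∈ P.walk.edges}

/-- The demand edge of a flow path. -/
def FlowPath.demandEdge {V : Type*} {G H : SimpleGraph V} (P : FlowPath G H) : Sym2 V :=
  s(P.src, P.dst)

/-- A multiflow `f` is feasible for capacities `c` if it is nonnegative and the total
flow through any supply edge is at most its capacity. -/
def MultiflowFeasible {V : Type*} (G H : SimpleGraph V) (c : Sym2 V → ℝ)
    (f : FlowPath G H → ℝ) : Prop :=
  (∀ P, 0 ≤ f P) ∧
    ∀ e ∈ G.edgeSet, (∑ᶠ P ∈ {P : FlowPath G H | e ∈ P.edges}, f P) ≤ c e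

/-- The value of a multiflow: the total flow on all paths. -/
noncomputable def multiflowValue {V : Type*} {G H : SimpleGraph V}
    (f : FlowPath G H → ℝ) : ℝ :=
  ∑ᶠ P : FlowPath G H, f P

/-- An integer multiflow. -/
def IsIntegerFlow {V : Type*} {G H : SimpleGraph V} (f : FlowPath G H → ℝ) : Prop :=
  ∀ P, ∃ n : ℤ, f P = n

/-- A half-integer multiflow: every value is an integer multiple of `1/2`. -/
def IsHalfIntegerFlow {V : Type*} {G H : SimpleGraph V} (f : FlowPath G H → ℝ) : Prop :=
  ∀ P, ∃ n : ℤ, f P = n / 2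

/-- A multicut: a set of supply edges meeting every path of `𝒫`. -/
def IsMulticut {V : Type*} (G H : SimpleGraph V) (M : Set (Sym2 V)) : Prop :=
  M ⊆ G.edgeSet ∧ ∀ P : FlowPath G H, ∃ e ∈ M, e ∈ P.edges

/-- The capacity of a set of edges. -/
noncomputable def edgeSetCapacity {V : Type*} (c : Sym2 V → ℝ) (M : Set (Sym2 V)) : ℝ :=
  ∑ᶠ e ∈ M, c e

/-- `S` is the edge set of a circuit of `D` (a connected subgraph with all degrees two). -/
def IsCircuitEdgeSet {W : Type*} (D : SimpleGraph W) (S : Set (Sym2 W)) : Prop :=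
  ∃ (w : W) (C : D.Walk w w), C.IsCycle ∧ S = {e | e ∈ C.edges}

/-- `C` is a cut of the graph `G`. -/
def IsGraphCut {V : Type*} (G : SimpleGraph V) (C : Set (Sym2 V)) : Prop :=
  ∃ S : Set V, C = cutEdges G.edgeSet S

/-- `C` is an inclusionwise minimal nonempty cut of `G`. -/
def IsMinimalCut {V : Type*} (G : SimpleGraph V) (C : Set (Sym2 V)) : Prop :=
  C.Nonempty ∧ IsGraphCut G C ∧
    ∀ C', C'.Nonempty → IsGraphCut G C' → C' ⊆ C → C' = C

/-- `Q` is a 2-connector for the demand edges `F'` within the supply edges `E'`: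
every demand edge lies on a circuit of `Q ∪ F'`. -/
def Is2Connector {W : Type*} (E' F' Q : Set (Sym2 W)) : Prop :=
  Q ⊆ E' ∧ ∀ e ∈ F',
    ∃ S, IsCircuitEdgeSet (SimpleGraph.fromEdgeSet (Q ∪ F')) S ∧ e ∈ S

/-- `D` together with the edge correspondence `star` is a planar dual of `G'`
(Whitney's characterisation): `star` is a bijection between the edges of `G'` and
those of `D` under which inclusionwise minimal cuts correspond to circuits and
circuits correspond to inclusionwise minimal cuts. -/
def IsPlanarDual {V W : Type*} (G' : SimpleGraph V) (D : SimpleGraph W)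
    (star : Sym2 V → Sym2 W) : Prop :=
  Set.InjOn star G'.edgeSet ∧ star '' G'.edgeSet = D.edgeSet ∧
    (∀ C ⊆ G'.edgeSet, (IsMinimalCut G' C ↔ IsCircuitEdgeSet D (star '' C))) ∧
    (∀ C ⊆ G'.edgeSet, (IsCircuitEdgeSet G' C ↔ IsMinimalCut D (star '' C)))

/-- A laminar family: any two members are disjoint or one contains the other. -/
def IsLaminar {α : Type*} (𝓛 : Set (Set α)) : Prop :=
  ∀ A ∈ 𝓛, ∀ B ∈ 𝓛, A ⊆ B ∨ B ⊆ A ∨ Disjoint A B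

/-- The supply graph `G_k`: vertices `a_i = Sum.inl i`, `b_i = Sum.inr i` (`i : Fin k`,
0-indexed), with edges `a_i b_i` and `a_i a_{i+1}`, all of capacity `1`. -/
def Gk (k : ℕ) : SimpleGraph (Fin k ⊕ Fin k) :=
  SimpleGraph.fromEdgeSet
    ({e | ∃ i : Fin k, e = s(Sum.inl i, Sum.inr i)} ∪
      {e | ∃ i j : Fin k, (j : ℕ) = (i : ℕ) + 1 ∧ e = s(Sum.inl i, Sum.inl j)})

/-- The demand graph `H_k`: edges `b_i b_{i+1}` and `b_i a_{i+2}`. -/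
def Hk (k : ℕ) : SimpleGraph (Fin k ⊕ Fin k) :=
  SimpleGraph.fromEdgeSet
    ({e | ∃ i j : Fin k, (j : ℕ) = (i : ℕ) + 1 ∧ e = s(Sum.inr i, Sum.inr j)} ∪
      {e | ∃ i j : Fin k, (j : ℕ) = (i : ℕ) + 2 ∧ e = s(Sum.inr i, Sum.inl j)})

/-! Every demand edge of `H_k` joins two different columns (`a_i` and `b_i` lie in column `i`),
and the only supply edges between different columns are the spine edges `a_i a_{i+1}`, so the
`k - 1` spine edges form a multicut.

Conversely, split the supply edges into the blocks `{a_i b_i, a_i a_{i+1}}` (`i < k - 1`) and the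
last edge `a_{k-1} b_{k-1}`. If a multicut misses block `i`, the paths `b_i a_i a_{i+1} b_{i+1}`
and `b_i a_i a_{i+1} a_{i+2}` force it to contain all of block `i + 1` (or the last edge, when
`i = k - 2`). So each missed block is paid for by the next one, and the multicut has at least
`k - 1` edges. -/

theorem IsMulticut.exists_mem_edges {V : Type*} {G H : SimpleGraph V} {M : Set (Sym2 V)}
    (hM : IsMulticut G H M) {u v : V} (huv : H.Adj u v) (w : G.Walk u v) :
    ∃ e ∈ M, e ∈ w.edges := by
  obtain ⟨e, heM, he⟩ := hM.2 ⟨u, v, huv, w.bypass, w.bypass_isPath⟩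
  exact ⟨e, heM, w.edges_bypass_subset_edges he⟩

theorem SimpleGraph.Walk.exists_mem_edges_ne_of_ne {V α : Type*} {G : SimpleGraph V} (f : V → α)
    {u v : V} (w : G.Walk u v) (huv : f u ≠ f v) :
    ∃ x y, G.Adj x y ∧ s(x, y) ∈ w.edges ∧ f x ≠ f y := by
  obtain ⟨d, hd, hfst, hsnd⟩ := w.exists_boundary_dart {x | f x = f u} rfl huv.symm
  exact ⟨d.fst, d.snd, d.adj, List.mem_map_of_mem hd, fun h => hsnd (h.symm.trans hfst)⟩

-- Each zero weight is paid for by the weight `≥ 2` after it; only a zero at the end stays unpaid.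
open Finset in
theorem le_sum_range_add_ite_of_eq_zero (w : ℕ → ℕ) {m : ℕ}
    (hw : ∀ n, n + 1 < m → w n = 0 → 2 ≤ w (n + 1)) :
    m ≤ ∑ n ∈ range m, w n + if w (m - 1) = 0 then 1 else 0 := by
  induction m with
  | zero => simp
  | succ m ih =>
    rcases m with _ | m
    · simp only [zero_add, range_one, sum_singleton, Nat.sub_self]
      split_ifs <;> omega
    have ih := ih fun n hn => hw n (by omega)
    have hprev := hw m (by omega)
    rw [sum_range_succ]
    simp only [Nat.add_sub_cancel] at ih ⊢
    split_ifs at ih ⊢ <;> omega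

open Fin.NatCast in
theorem Fin.natCast_eq_natCast_iff_of_lt {k : ℕ} [NeZero k] {m n : ℕ} (hm : m < k)
    (hn : n < k) :
    (m : Fin k) = n ↔ m = n := by
  rw [Fin.ext_iff, Fin.val_cast_of_lt hm, Fin.val_cast_of_lt hn]

namespace Gk

open Finset Fin.NatCast

def column (k : ℕ) : Fin k ⊕ Fin k → ℕ := Sum.elim Fin.val Fin.val

theorem column_ne_of_hk_adj {k : ℕ} {u v : Fin k ⊕ Fin k} (h : (Hk k).Adj u v) :
    column k u ≠ column k v := by
  rw [Hk, SimpleGraph.fromEdgeSet_adj] at h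
  rcases h.1 with ⟨i, j, hj, he⟩ | ⟨i, j, hj, he⟩ <;>
    · rw [Sym2.eq_iff] at he
      rcases he with ⟨rfl, rfl⟩ | ⟨rfl, rfl⟩ <;> simp [column] <;> omega

variable (k : ℕ) [NeZero k]

-- `n` is read modulo `k`; the lemmas below carry the bounds that rule out wrap-around.
def a (n : ℕ) : Fin k ⊕ Fin k := Sum.inl (n : Fin k)

def b (n : ℕ) : Fin k ⊕ Fin k := Sum.inr (n : Fin k)

def pendantEdge (n : ℕ) : Sym2 (Fin k ⊕ Fin k) := s(a k n, b k n)

def spineEdge (n : ℕ) : Sym2 (Fin k ⊕ Fin k) := s(a k n, a k (n + 1))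

def block (n : ℕ) : Finset (Sym2 (Fin k ⊕ Fin k)) := {pendantEdge k n, spineEdge k n}

def spineEdges : Finset (Sym2 (Fin k ⊕ Fin k)) := (range (k - 1)).image (spineEdge k)

variable {k}

theorem a_eq_a_iff {m n : ℕ} (hm : m < k) (hn : n < k) : a k m = a k n ↔ m = n := by
  rw [a, a, Sum.inl.injEq, Fin.natCast_eq_natCast_iff_of_lt hm hn]

theorem b_eq_b_iff {m n : ℕ} (hm : m < k) (hn : n < k) : b k m = b k n ↔ m = n := by
  rw [b, b, Sum.inr.injEq, Fin.natCast_eq_natCast_iff_of_lt hm hn]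

theorem pendantEdge_eq_iff {m n : ℕ} (hm : m < k) (hn : n < k) :
    pendantEdge k m = pendantEdge k n ↔ m = n := by
  simp [pendantEdge, a, b, Fin.natCast_eq_natCast_iff_of_lt hm hn]

theorem spineEdge_eq_iff {m n : ℕ} (hm : m + 1 < k) (hn : n + 1 < k) :
    spineEdge k m = spineEdge k n ↔ m = n := by
  have hm' := m.lt_succ_self.trans hm
  have hn' := n.lt_succ_self.trans hn
  simp only [spineEdge, Sym2.eq_iff, a_eq_a_iff hm' hn', a_eq_a_iff hm hn, a_eq_a_iff hm' hn,
    a_eq_a_iff hm hn']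
  omega

theorem pendantEdge_ne_spineEdge (m n : ℕ) : pendantEdge k m ≠ spineEdge k n := by
  simp [pendantEdge, spineEdge, a, b]

theorem adj_a_b (n : ℕ) : (Gk k).Adj (a k n) (b k n) := by
  rw [Gk, SimpleGraph.fromEdgeSet_adj]
  exact ⟨Or.inl ⟨n, rfl⟩, by simp [a, b]⟩

theorem adj_a_a_succ {n : ℕ} (hn : n + 1 < k) : (Gk k).Adj (a k n) (a k (n + 1)) := by
  rw [Gk, SimpleGraph.fromEdgeSet_adj, Ne, a_eq_a_iff (n.lt_succ_self.trans hn) hn]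
  refine ⟨Or.inr ⟨n, (n + 1 : ℕ), ?_, rfl⟩, by omega⟩
  rw [Fin.val_cast_of_lt hn, Fin.val_cast_of_lt (n.lt_succ_self.trans hn)]

theorem hk_adj_b_b_succ {n : ℕ} (hn : n + 1 < k) : (Hk k).Adj (b k n) (b k (n + 1)) := by
  rw [Hk, SimpleGraph.fromEdgeSet_adj, Ne, b_eq_b_iff (n.lt_succ_self.trans hn) hn]
  refine ⟨Or.inl ⟨n, (n + 1 : ℕ), ?_, rfl⟩, by omega⟩
  rw [Fin.val_cast_of_lt hn, Fin.val_cast_of_lt (n.lt_succ_self.trans hn)]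

theorem hk_adj_b_a_add_two {n : ℕ} (hn : n + 2 < k) : (Hk k).Adj (b k n) (a k (n + 2)) := by
  rw [Hk, SimpleGraph.fromEdgeSet_adj]
  refine ⟨Or.inr ⟨n, (n + 2 : ℕ), ?_, rfl⟩, by simp [a, b]⟩
  rw [Fin.val_cast_of_lt hn, Fin.val_cast_of_lt (by omega : n < k)]

theorem exists_spineEdge_of_adj_of_column_ne {u v : Fin k ⊕ Fin k} (h : (Gk k).Adj u v)
    (huv : column k u ≠ column k v) : ∃ n, n + 1 < k ∧ s(u, v) = spineEdge k n := by
  rw [Gk, SimpleGraph.fromEdgeSet_adj] at h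
  rcases h.1 with ⟨i, he⟩ | ⟨i, j, hj, he⟩
  · rw [Sym2.eq_iff] at he
    rcases he with ⟨rfl, rfl⟩ | ⟨rfl, rfl⟩ <;> simp [column] at huv
  · have hj' : ((i + 1 : ℕ) : Fin k) = j :=
      Fin.ext (by rw [Fin.val_cast_of_lt (by omega)]; omega)
    exact ⟨i, by omega, by rw [he, spineEdge, a, a, Fin.cast_val_eq_self, hj']⟩

theorem isMulticut_spineEdges : IsMulticut (Gk k) (Hk k) ↑(spineEdges k) := by
  refine ⟨?_, fun P => ?_⟩
  · simp only [spineEdges, coe_image, coe_range, Set.image_subset_iff]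
    exact fun _ hn => adj_a_a_succ (by simp at hn; omega)
  · obtain ⟨x, y, hxy, hmem, hne⟩ :=
      P.walk.exists_mem_edges_ne_of_ne (column k) (column_ne_of_hk_adj P.demand)
    obtain ⟨n, hn, he⟩ := exists_spineEdge_of_adj_of_column_ne hxy hne
    exact ⟨_, mem_image_of_mem _ (mem_range.2 (by omega)), he ▸ hmem⟩

theorem card_spineEdges : #(spineEdges k) = k - 1 := by
  rw [spineEdges, card_image_of_injOn, card_range]
  intro m hm n hn h
  simp only [coe_range, Set.mem_Iio] at hm hn
  exact (spineEdge_eq_iff (by omega) (by omega)).1 h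

variable {M : Set (Sym2 (Fin k ⊕ Fin k))}

theorem pendantEdge_succ_mem (hM : IsMulticut (Gk k) (Hk k) M) {n : ℕ} (hn : n + 1 < k)
    (hp : pendantEdge k n ∉ M) (hs : spineEdge k n ∉ M) : pendantEdge k (n + 1) ∈ M := by
  obtain ⟨e, heM, he⟩ := hM.exists_mem_edges (hk_adj_b_b_succ hn)
    (.cons (adj_a_b n).symm (.cons (adj_a_a_succ hn) (.cons (adj_a_b (n + 1)) .nil)))
  simp only [SimpleGraph.Walk.edges_cons, SimpleGraph.Walk.edges_nil, List.mem_cons,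
    List.not_mem_nil, or_false] at he
  rcases he with rfl | rfl | rfl
  · exact (hp (by rwa [pendantEdge, Sym2.eq_swap])).elim
  · exact absurd heM hs
  · exact heM

theorem spineEdge_succ_mem (hM : IsMulticut (Gk k) (Hk k) M) {n : ℕ} (hn : n + 2 < k)
    (hp : pendantEdge k n ∉ M) (hs : spineEdge k n ∉ M) : spineEdge k (n + 1) ∈ M := by
  obtain ⟨e, heM, he⟩ := hM.exists_mem_edges (hk_adj_b_a_add_two hn)
    (.cons (adj_a_b n).symm (.cons (adj_a_a_succ (by omega)) (.cons (adj_a_a_succ hn) .nil)))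
  simp only [SimpleGraph.Walk.edges_cons, SimpleGraph.Walk.edges_nil, List.mem_cons,
    List.not_mem_nil, or_false] at he
  rcases he with rfl | rfl | rfl
  · exact (hp (by rwa [pendantEdge, Sym2.eq_swap])).elim
  · exact absurd heM hs
  · exact heM

variable (M) in
theorem sum_card_filter_block_add_le_ncard :
    ∑ n ∈ range (k - 1), #((block k n).filter (· ∈ M)) +
      (if pendantEdge k (k - 1) ∈ M then 1 else 0) ≤ M.ncard := by
  have hblocks :
      (range (k - 1) : Set ℕ).PairwiseDisjoint fun n => (block k n).filter (· ∈ M) := by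
    intro m hm n hn hmn
    simp only [coe_range, Set.mem_Iio] at hm hn
    have hp : pendantEdge k n ≠ pendantEdge k m :=
      fun h => hmn ((pendantEdge_eq_iff (by omega) (by omega)).1 h).symm
    have hs : spineEdge k n ≠ spineEdge k m :=
      fun h => hmn ((spineEdge_eq_iff (by omega) (by omega)).1 h).symm
    refine disjoint_filter_filter ?_
    simp [block, hp, hs, pendantEdge_ne_spineEdge, (pendantEdge_ne_spineEdge _ _).symm]
  have hlast : Disjoint ((range (k - 1)).biUnion fun n => (block k n).filter (· ∈ M))
      (({pendantEdge k (k - 1)} : Finset _).filter (· ∈ M)) := by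
    rw [disjoint_biUnion_left]
    intro n hn
    rw [mem_range] at hn
    have hp : pendantEdge k (k - 1) ≠ pendantEdge k n := fun h =>
      hn.ne' ((pendantEdge_eq_iff (Nat.sub_one_lt (NeZero.ne k)) (by omega)).1 h)
    refine disjoint_filter_filter ?_
    simp [block, hp, pendantEdge_ne_spineEdge]
  set B := ((range (k - 1)).biUnion fun n => (block k n).filter (· ∈ M)) ∪
    ({pendantEdge k (k - 1)} : Finset _).filter (· ∈ M)
  have hB : (B : Set (Sym2 (Fin k ⊕ Fin k))) ⊆ M := by
    rw [coe_union, coe_biUnion]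
    exact Set.union_subset (Set.iUnion₂_subset fun _ _ _ he => (mem_filter.1 he).2)
      fun _ he => (mem_filter.1 he).2
  calc _ = #B := by
        rw [card_union_of_disjoint hlast, card_biUnion hblocks, filter_singleton]
        split_ifs <;> rfl
    _ = (B : Set _).ncard := (Set.ncard_coe_finset B).symm
    _ ≤ M.ncard := Set.ncard_le_ncard hB

theorem sub_one_le_ncard_of_isMulticut (hM : IsMulticut (Gk k) (Hk k) M) : k - 1 ≤ M.ncard := by
  obtain rfl | hk := (Nat.one_le_iff_ne_zero.2 (NeZero.ne k)).eq_or_lt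
  · simp
  set w := fun n => #((block k n).filter (· ∈ M))
  have hw_zero {n : ℕ} (h : w n = 0) : pendantEdge k n ∉ M ∧ spineEdge k n ∉ M := by
    simpa [w, block, filter_eq_empty_iff] using h
  have hw (n : ℕ) (hn : n + 1 < k - 1) (h : w n = 0) : 2 ≤ w (n + 1) := by
    obtain ⟨hp, hs⟩ := hw_zero h
    have hfull : (block k (n + 1)).filter (· ∈ M) = block k (n + 1) := filter_true_of_mem <| by
      simp [block, pendantEdge_succ_mem hM (by omega) hp hs, spineEdge_succ_mem hM (by omega) hp hs]
    rw [show w (n + 1) = #(block k (n + 1)) from congrArg card hfull, block,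
      card_pair (pendantEdge_ne_spineEdge _ _)]
  have hlast :
      (if w (k - 1 - 1) = 0 then 1 else 0) ≤ if pendantEdge k (k - 1) ∈ M then 1 else 0 := by
    split_ifs with h hmem <;> try omega
    obtain ⟨hp, hs⟩ := hw_zero h
    have := pendantEdge_succ_mem hM (by omega) hp hs
    rw [Nat.sub_add_cancel (by omega)] at this
    exact absurd this hmem
  calc k - 1 ≤ ∑ n ∈ range (k - 1), w n + if w (k - 1 - 1) = 0 then 1 else 0 :=
        le_sum_range_add_ite_of_eq_zero w hw
    _ ≤ ∑ n ∈ range (k - 1), w n + if pendantEdge k (k - 1) ∈ M then 1 else 0 := by gcongr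
    _ ≤ M.ncard := sum_card_filter_block_add_le_ncard M

end Gk

/-- For every `k ≥ 3` the minimum cardinality of a multicut for
`(G_k, H_k)` (unit capacities) is exactly `k - 1`. -/
theorem min_multicut_Gk (k : ℕ) (hk : 3 ≤ k) :
    IsLeast {n : ℕ | ∃ M : Set (Sym2 (Fin k ⊕ Fin k)),
      IsMulticut (Gk k) (Hk k) M ∧ n = M.ncard} (k - 1) := by
  have : NeZero k := ⟨by omega⟩
  refine ⟨⟨_, Gk.isMulticut_spineEdges, ?_⟩, ?_⟩
  · rw [Set.ncard_coe_finset, Gk.card_spineEdges]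
  · rintro _ ⟨M, hM, rfl⟩
    exact Gk.sub_one_le_ncard_of_isMulticut hM
end

section
/- For every integer k ≥ 3, the maximum value of a feasible integer multiflow on the instance (G_k, H_k) with all supply edge capacities equal to 1 is exactly ⌊k/2⌋. -/
open scoped Classical

section Aux

open SimpleGraph Sum

lemma walk_cross {V : Type*} {G : SimpleGraph V} (S : Set V) {u v : V} (w : G.Walk u v) :
    u ∈ S → v ∉ S → ∃ x y, x ∈ S ∧ y ∉ S ∧ G.Adj x y ∧ s(x, y) ∈ w.edges := by
  induction w with
  | nil => intro hu hv; exact absurd hu hv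
  | cons h p ih =>
    intro hu hv
    rename_i a b c
    by_cases hb : b ∈ S
    · obtain ⟨x, y, h1, h2, h3, h4⟩ := ih hb hv
      exact ⟨x, y, h1, h2, h3, by simp [SimpleGraph.Walk.edges_cons, h4]⟩
    · exact ⟨a, b, hu, hb, h, by simp [SimpleGraph.Walk.edges_cons]⟩

lemma flowPathFinite {V : Type*} [Fintype V] [DecidableEq V]
    (G H : SimpleGraph V) : Finite (FlowPath G H) := by
  have hinj : Function.Injective
      (fun P : FlowPath G H => (⟨P.src, P.dst, ⟨P.walk, P.isPath⟩⟩ : Σ u v : V, G.Path u v)) := by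
    rintro ⟨s, d, hd, w, hw⟩ ⟨s', d', hd', w', hw'⟩ h
    simp only [Sigma.mk.inj_iff] at h
    obtain ⟨rfl, h⟩ := h
    obtain ⟨rfl, h⟩ := Sigma.mk.inj_iff.mp (eq_of_heq h)
    have := Subtype.mk_eq_mk.mp (eq_of_heq h)
    subst this
    rfl
  exact Finite.of_injective _ hinj

variable {k : ℕ}

lemma Gk_adj {x y : Fin k ⊕ Fin k} (h : (Gk k).Adj x y) :
    (∃ i : Fin k, s(x, y) = s(inl i, inr i)) ∨
      (∃ i j : Fin k, (j : ℕ) = (i : ℕ) + 1 ∧ s(x, y) = s(inl i, inl j)) := by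
  rw [Gk, SimpleGraph.fromEdgeSet_adj] at h
  exact h.1

lemma Hk_adj {x y : Fin k ⊕ Fin k} (h : (Hk k).Adj x y) :
    (∃ i j : Fin k, (j : ℕ) = (i : ℕ) + 1 ∧ s(x, y) = s(inr i, inr j)) ∨
      (∃ i j : Fin k, (j : ℕ) = (i : ℕ) + 2 ∧ s(x, y) = s(inr i, inl j)) := by
  rw [Hk, SimpleGraph.fromEdgeSet_adj] at h
  exact h.1

end Aux
section Aux2

open SimpleGraph Sum

variable {k : ℕ}

/-- index of a vertex -/
def vidx : Fin k ⊕ Fin k → ℕ := Sum.elim (·.val) (·.val)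

lemma mem_edges_reverse {V : Type*} {G : SimpleGraph V} {u v : V} {w : G.Walk u v}
    {e : Sym2 V} : e ∈ w.reverse.edges ↔ e ∈ w.edges := by
  simp [SimpleGraph.Walk.edges_reverse]

lemma leg_mem {i : Fin k} {v : Fin k ⊕ Fin k} (w : (Gk k).Walk (inr i) v)
    (hv : v ≠ inr i) : s(inl i, inr i) ∈ w.edges := by
  obtain ⟨x, y, h1, h2, h3, h4⟩ := walk_cross {inr i} w rfl hv
  simp only [Set.mem_singleton_iff] at h1 h2
  subst h1
  rcases Gk_adj h3 with ⟨m, hm⟩ | ⟨m, m', _, hm⟩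
  · rw [Sym2.eq_iff] at hm
    rcases hm with ⟨h5, h6⟩ | ⟨h5, h6⟩
    · exact absurd h5 (by simp)
    · obtain rfl := (inr_injective (α := Fin k) h5)
      subst h6
      rwa [Sym2.eq_swap] at h4
  · rw [Sym2.eq_iff] at hm
    rcases hm with ⟨h5, _⟩ | ⟨h5, _⟩ <;> exact absurd h5 (by simp)

lemma spine_mem {i j : Fin k} (hij : (j : ℕ) = (i : ℕ) + 1) {u v : Fin k ⊕ Fin k}
    (w : (Gk k).Walk u v) (hu : vidx u ≤ (i : ℕ)) (hv : (i : ℕ) < vidx v) :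
    s(inl i, inl j) ∈ w.edges := by
  obtain ⟨x, y, h1, h2, h3, h4⟩ := walk_cross {z | vidx z ≤ (i : ℕ)} w hu (by simpa using hv)
  simp only [Set.mem_setOf_eq, not_le] at h1 h2
  rcases Gk_adj h3 with ⟨m, hm⟩ | ⟨m, m', hmm', hm⟩
  · rw [Sym2.eq_iff] at hm
    rcases hm with ⟨h5, h6⟩ | ⟨h5, h6⟩ <;>
      (subst h5; subst h6; simp [vidx] at h1 h2; omega)
  · rw [Sym2.eq_iff] at hm
    rcases hm with ⟨h5, h6⟩ | ⟨h5, h6⟩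
    · subst h5; subst h6
      simp only [vidx, Sum.elim_inl] at h1 h2
      have hmi : m = i := Fin.ext (by omega)
      have hm'j : m' = j := Fin.ext (by omega)
      subst hmi; subst hm'j; exact h4
    · subst h5; subst h6
      simp only [vidx, Sum.elim_inl] at h1 h2
      omega

lemma bb_edges {i j : Fin k} (hij : (j : ℕ) = (i : ℕ) + 1)
    (w : (Gk k).Walk (inr i) (inr j)) :
    s(inl i, inr i) ∈ w.edges ∧ s(inl i, inl j) ∈ w.edges ∧ s(inl j, inr j) ∈ w.edges := by
  refine ⟨leg_mem w (by simp; intro h; exact absurd (congrArg Fin.val h) (by omega)), ?_, ?_⟩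
  · exact spine_mem hij w (by simp [vidx]) (by simp [vidx]; omega)
  · exact mem_edges_reverse.mp (leg_mem w.reverse
      (by simp; intro h; exact absurd (congrArg Fin.val h) (by omega)))

lemma ba_edges {i j : Fin k} (hij : (j : ℕ) = (i : ℕ) + 2)
    (w : (Gk k).Walk (inr i) (inl j)) :
    ∃ m : Fin k, (m : ℕ) = (i : ℕ) + 1 ∧ s(inl i, inr i) ∈ w.edges ∧
      s(inl i, inl m) ∈ w.edges ∧ s(inl m, inl j) ∈ w.edges := by
  have hjk : (j : ℕ) < k := j.isLt
  refine ⟨⟨(i : ℕ) + 1, by omega⟩, rfl, ?_, ?_, ?_⟩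
  · exact leg_mem w (by simp)
  · exact spine_mem rfl w (by simp [vidx]) (by simp [vidx]; omega)
  · exact spine_mem (by simp [hij]) w (by simp [vidx]) (by simp [vidx]; omega)

lemma flowpath_data (P : FlowPath (Gk k) (Hk k)) :
    ∃ i j : Fin k, (j : ℕ) = (i : ℕ) + 1 ∧ s(inl i, inr i) ∈ P.walk.edges ∧
      s(inl i, inl j) ∈ P.walk.edges ∧
      (s(inl j, inr j) ∈ P.walk.edges ∨
        ∃ m : Fin k, (m : ℕ) = (j : ℕ) + 1 ∧ s(inl j, inl m) ∈ P.walk.edges) := by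
  obtain ⟨s, d, hd, w, hw⟩ := P
  simp only at *
  rcases Hk_adj hd with ⟨i, j, hij, hm⟩ | ⟨i, j, hij, hm⟩ <;> rw [Sym2.eq_iff] at hm
  · rcases hm with ⟨h5, h6⟩ | ⟨h5, h6⟩ <;> (subst h5; subst h6)
    · obtain ⟨e1, e2, e3⟩ := bb_edges hij w
      exact ⟨i, j, hij, e1, e2, Or.inl e3⟩
    · obtain ⟨e1, e2, e3⟩ := bb_edges hij w.reverse
      exact ⟨i, j, hij, mem_edges_reverse.mp e1, mem_edges_reverse.mp e2,
        Or.inl (mem_edges_reverse.mp e3)⟩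
  · rcases hm with ⟨h5, h6⟩ | ⟨h5, h6⟩ <;> (subst h5; subst h6)
    · obtain ⟨m, hm1, e1, e2, e3⟩ := ba_edges hij w
      exact ⟨i, m, hm1, e1, e2, Or.inr ⟨j, by omega, e3⟩⟩
    · obtain ⟨m, hm1, e1, e2, e3⟩ := ba_edges hij w.reverse
      exact ⟨i, m, hm1, mem_edges_reverse.mp e1, mem_edges_reverse.mp e2,
        Or.inr ⟨j, by omega, mem_edges_reverse.mp e3⟩⟩

end Aux2
section Aux3

open SimpleGraph Sum

variable {k : ℕ}

lemma Gk_adj_leg (i : Fin k) : (Gk k).Adj (inl i) (inr i) := by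
  rw [Gk, SimpleGraph.fromEdgeSet_adj]
  exact ⟨Or.inl ⟨i, rfl⟩, by simp⟩

lemma Gk_adj_spine {i j : Fin k} (h : (j : ℕ) = (i : ℕ) + 1) :
    (Gk k).Adj (inl i) (inl j) := by
  rw [Gk, SimpleGraph.fromEdgeSet_adj]
  refine ⟨Or.inr ⟨i, j, h, rfl⟩, by simp [Fin.ext_iff]; omega⟩

lemma Hk_adj_bb {i j : Fin k} (h : (j : ℕ) = (i : ℕ) + 1) :
    (Hk k).Adj (inr i) (inr j) := by
  rw [Hk, SimpleGraph.fromEdgeSet_adj]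
  refine ⟨Or.inl ⟨i, j, h, rfl⟩, by simp [Fin.ext_iff]; omega⟩

/-- `a_{2j}` -/
def fin0 (j : Fin (k / 2)) : Fin k := ⟨2 * j, by have := j.isLt; omega⟩
/-- `a_{2j+1}` -/
def fin1 (j : Fin (k / 2)) : Fin k := ⟨2 * j + 1, by have := j.isLt; omega⟩

@[simp] lemma fin0_val (j : Fin (k / 2)) : (fin0 j : ℕ) = 2 * j := rfl
@[simp] lemma fin1_val (j : Fin (k / 2)) : (fin1 j : ℕ) = 2 * j + 1 := rfl

/-- The `j`-th path of the optimal integer multiflow: `b_{2j} a_{2j} a_{2j+1} b_{2j+1}`. -/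
noncomputable def Dpath (j : Fin (k / 2)) : FlowPath (Gk k) (Hk k) where
  src := inr (fin0 j)
  dst := inr (fin1 j)
  demand := Hk_adj_bb rfl
  walk := .cons (Gk_adj_leg _).symm (.cons (Gk_adj_spine rfl) (.cons (Gk_adj_leg _) .nil))
  isPath := by
    rw [SimpleGraph.Walk.isPath_def]
    simp [Fin.ext_iff]

lemma Dpath_edges (j : Fin (k / 2)) :
    (Dpath j).walk.edges =
      [s(inr (fin0 j), inl (fin0 j)), s(inl (fin0 j), inl (fin1 j)),
        s(inl (fin1 j), inr (fin1 j))] := by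
  simp [Dpath]

lemma Dpath_src (j : Fin (k / 2)) : (Dpath j).src = inr (fin0 j) := rfl

lemma Dpath_edge_disjoint {j j' : Fin (k / 2)} {e : Sym2 (Fin k ⊕ Fin k)}
    (h : e ∈ (Dpath j).walk.edges) (h' : e ∈ (Dpath (k := k) j').walk.edges) : j = j' := by
  rw [Dpath_edges] at h h'
  refine Fin.ext ?_
  simp only [List.mem_cons, List.not_mem_nil, or_false] at h h'
  rcases h with rfl | rfl | rfl <;>
    (rcases h' with h' | h' | h' <;>
      (rw [Sym2.eq_iff] at h'; simp only [Sum.inl.injEq, Sum.inr.injEq,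
        reduceCtorEq, Fin.ext_iff, fin0_val, fin1_val, and_false, false_and,
        false_or, or_false] at h' <;> omega))

lemma Dpath_injective : Function.Injective (Dpath (k := k)) := by
  intro j j' h
  have h2 := congrArg FlowPath.src h
  rw [Dpath_src, Dpath_src] at h2
  simp only [Sum.inr.injEq, Fin.ext_iff, fin0_val] at h2
  exact Fin.ext (by omega)

end Aux3
/-- For every `k ≥ 3` the maximum value of a feasible integer multiflow
on `(G_k, H_k)` with unit capacities is exactly `⌊k/2⌋`. -/
theorem max_integer_multiflow_Gk (k : ℕ) (hk : 3 ≤ k) :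
    IsGreatest {x : ℝ | ∃ f : FlowPath (Gk k) (Hk k) → ℝ,
        MultiflowFeasible (Gk k) (Hk k) (fun _ => 1) f ∧ IsIntegerFlow f ∧
          x = multiflowValue f}
      ((k / 2 : ℕ) : ℝ) := by
  haveI : Finite (FlowPath (Gk k) (Hk k)) := flowPathFinite _ _
  cases nonempty_fintype (FlowPath (Gk k) (Hk k))
  have hset : ∀ e : Sym2 (Fin k ⊕ Fin k),
      {P : FlowPath (Gk k) (Hk k) | e ∈ P.edges} =
        ↑(Finset.univ.filter (fun P : FlowPath (Gk k) (Hk k) => e ∈ P.walk.edges)) := by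
    intro e; ext P; simp [FlowPath.edges]
  constructor
  · -- membership : there is a feasible integer multiflow of value k/2
    refine ⟨fun P => if P ∈ Set.range (Dpath (k := k)) then 1 else 0, ⟨?_, ?_⟩, ?_, ?_⟩
    · intro P; dsimp only; split <;> norm_num
    · intro e he
      rw [hset e, finsum_mem_coe_finset, Finset.sum_boole, Finset.filter_filter]
      have hcard : (Finset.univ.filter (fun P : FlowPath (Gk k) (Hk k) =>
          e ∈ P.walk.edges ∧ P ∈ Set.range (Dpath (k := k)))).card ≤ 1 := by
        refine Finset.card_le_one.mpr ?_
        intro P hP Q hQ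
        simp only [Finset.mem_filter, Set.mem_range] at hP hQ
        obtain ⟨-, heP, j, rfl⟩ := hP
        obtain ⟨-, heQ, j', rfl⟩ := hQ
        rw [Dpath_edge_disjoint heP heQ]
      have : ((Finset.univ.filter (fun P : FlowPath (Gk k) (Hk k) =>
          e ∈ P.walk.edges ∧ P ∈ Set.range (Dpath (k := k)))).card : ℝ) ≤ 1 := by
        exact_mod_cast hcard
      simpa using this
    · intro P; dsimp only; split
      · exact ⟨1, by norm_num⟩
      · exact ⟨0, by norm_num⟩
    · rw [multiflowValue, finsum_eq_sum_of_fintype, Finset.sum_boole]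
      have : Finset.univ.filter (fun P : FlowPath (Gk k) (Hk k) =>
          P ∈ Set.range (Dpath (k := k))) = Finset.univ.image (Dpath (k := k)) := by
        ext P; simp [Set.mem_range, eq_comm]
      rw [this, Finset.card_image_of_injective _ Dpath_injective]
      simp
  · -- upper bound
    rintro x ⟨f, ⟨hpos, hcap⟩, hint, rfl⟩
    have hcap' : ∀ e ∈ (Gk k).edgeSet,
        ∑ P ∈ Finset.univ.filter (fun P : FlowPath (Gk k) (Hk k) => e ∈ P.walk.edges),
          f P ≤ 1 := by
      intro e he
      have := hcap e he
      rwa [hset e, finsum_mem_coe_finset] at this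
    set T := Finset.univ.filter (fun P : FlowPath (Gk k) (Hk k) => f P ≠ 0) with hT
    -- every path in the support carries at least one unit of flow
    have hge1 : ∀ P ∈ T, (1 : ℝ) ≤ f P := by
      intro P hP
      rw [hT, Finset.mem_filter] at hP
      obtain ⟨n, hn⟩ := hint P
      have h0 : (0 : ℝ) ≤ n := hn ▸ hpos P
      have h0' : 0 ≤ n := by exact_mod_cast h0
      have hne : n ≠ 0 := by rintro rfl; exact hP.2 (by simp [hn])
      have : 1 ≤ n := by omega
      rw [hn]; exact_mod_cast this
    -- every path carries at most one unit of flow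
    have hle1 : ∀ P : FlowPath (Gk k) (Hk k), f P ≤ 1 := by
      intro P
      obtain ⟨i, j, hij, hleg, -, -⟩ := flowpath_data P
      have he : s(Sum.inl i, Sum.inr i) ∈ (Gk k).edgeSet :=
        P.walk.edges_subset_edgeSet hleg
      refine le_trans ?_ (hcap' _ he)
      exact Finset.single_le_sum (fun Q _ => hpos Q) (by simpa using hleg)
    have hone : ∀ P ∈ T, f P = 1 := fun P hP => le_antisymm (hle1 P) (hge1 P hP)
    -- paths in the support are pairwise edge-disjoint
    have hdisj : ∀ P ∈ T, ∀ Q ∈ T, P ≠ Q → ∀ e : Sym2 (Fin k ⊕ Fin k),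
        e ∈ P.walk.edges → e ∈ Q.walk.edges → False := by
      intro P hP Q hQ hne e heP heQ
      have he : e ∈ (Gk k).edgeSet := P.walk.edges_subset_edgeSet heP
      have hsub : {P, Q} ⊆ Finset.univ.filter
          (fun R : FlowPath (Gk k) (Hk k) => e ∈ R.walk.edges) := by
        intro R hR
        simp only [Finset.mem_insert, Finset.mem_singleton] at hR
        rcases hR with rfl | rfl <;> simp [heP, heQ]
      have h2 : f P + f Q ≤ 1 := by
        calc f P + f Q = ∑ R ∈ ({P, Q} : Finset _), f R := (Finset.sum_pair hne).symm
          _ ≤ _ := Finset.sum_le_sum_of_subset_of_nonneg hsub (fun R _ _ => hpos R)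
          _ ≤ 1 := hcap' _ he
      have := hge1 P hP
      have := hge1 Q hQ
      linarith
    choose I J hIJ hleg hspine hslot using flowpath_data (k := k)
    have key : ∀ P ∈ T, ∀ Q ∈ T, (I P : ℕ) ≤ (I Q : ℕ) →
        (I P : ℕ) / 2 = (I Q : ℕ) / 2 → P = Q := by
      intro P hP Q hQ hle hhalf
      by_contra hne
      have hcase : (I Q : ℕ) = (I P : ℕ) ∨ (I Q : ℕ) = (I P : ℕ) + 1 := by omega
      rcases hcase with hc | hc
      · have hIQ : I Q = I P := Fin.ext hc
        exact hdisj P hP Q hQ hne _ (hleg P) (by rw [← hIQ]; exact hleg Q)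
      · have hIQ : I Q = J P := Fin.ext (by rw [hc, hIJ P])
        rcases hslot P with hP1 | ⟨m, hm, hP2⟩
        · exact hdisj P hP Q hQ hne _ hP1 (by rw [← hIQ]; exact hleg Q)
        · have hJQ : J Q = m := Fin.ext (by rw [hIJ Q, hIQ, hm])
          exact hdisj P hP Q hQ hne _ hP2 (by rw [← hIQ, ← hJQ]; exact hspine Q)
    have hmaps : ∀ P ∈ T, (I P : ℕ) / 2 ∈ Finset.range (k / 2) := by
      intro P _
      have h1 : (J P : ℕ) < k := (J P).isLt
      have h2 := hIJ P
      simp only [Finset.mem_range]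
      omega
    have hinj : Set.InjOn (fun P => (I P : ℕ) / 2) ↑T := by
      intro P hP Q hQ h
      rcases le_total (I P : ℕ) (I Q : ℕ) with hle | hle
      · exact key P (by simpa using hP) Q (by simpa using hQ) hle h
      · exact (key Q (by simpa using hQ) P (by simpa using hP) hle h.symm).symm
    have hcard : T.card ≤ k / 2 := by
      have := Finset.card_le_card_of_injOn (fun P => (I P : ℕ) / 2) hmaps hinj
      simpa using this
    have hval : multiflowValue f = (T.card : ℝ) := by
      rw [multiflowValue, finsum_eq_sum_of_fintype, ← Finset.sum_filter_ne_zero, ← hT]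
      rw [Finset.sum_congr rfl hone]
      simp
    rw [hval]
    exact_mod_cast hcard
end
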